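/- arXiv:2506.05861 — 3 statements merged into one kernel-verified Lean document; each statement's English description precedes it below -/
import Mathlib

section
/- The adjacency matrix of the dodecahedron graph has no eigenvalue in the open interval (-2, 0). -/
/-!
Every vertex of the dodecahedron lies on 3 of its 12 pentagonal faces and every edge on 2; as the
girth is 5, two vertices at distance 2 have a unique common neighbour, and the path through it lies
on exactly one face. On a single face the identity, the pentagon and its diagonals add up to the
all-ones block, so `A² + 2A = ∑_F 𝟙_F 𝟙_Fᵀ` is positive semidefinite. Hence `μ² + 2μ ≥ 0` for
every eigenvalue `μ` of `A`, which excludes `μ ∈ (-2, 0)`.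
-/

/-- The dodecahedron graph, realized as the generalized Petersen graph $GP(10,2)$:
outer vertices `(0, i)` form a 10-cycle, inner vertices `(1, i)` satisfy
`(1, i) ~ (1, i+2)`, and `(0, i) ~ (1, i)` are the spokes. -/
def dodecahedron : SimpleGraph (Fin 2 × Fin 10) :=
  SimpleGraph.fromRel (fun a b =>
    (a.1 = 0 ∧ b.1 = 0 ∧ b.2 = a.2 + 1) ∨
    (a.1 = 0 ∧ b.1 = 1 ∧ a.2 = b.2) ∨
    (a.1 = 1 ∧ b.1 = 1 ∧ b.2 = a.2 + 2))

instance : DecidableRel dodecahedron.Adj := fun a b =>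
  inferInstanceAs (Decidable (a ≠ b ∧ _))

open Matrix Polynomial

theorem Matrix.PosSemidef.eval_nonneg_of_mem_spectrum {n : Type*} [Fintype n] [DecidableEq n]
    {A : Matrix n n ℝ} {p : ℝ[X]} (hp : (aeval A p).PosSemidef) {μ : ℝ}
    (hμ : μ ∈ spectrum ℝ A) : 0 ≤ p.eval μ :=
  (posSemidef_iff_isHermitian_and_spectrum_nonneg.mp hp).2
    (spectrum.subset_polynomial_aeval A p ⟨μ, hμ, rfl⟩)

theorem Matrix.notMem_spectrum_of_posSemidef_mul_self_add_two_nsmul {n : Type*} [Fintype n]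
    [DecidableEq n] {A : Matrix n n ℝ} (hA : (A * A + 2 • A).PosSemidef) {μ : ℝ}
    (hμ : μ ∈ Set.Ioo (-2) 0) : μ ∉ spectrum ℝ A := by
  intro hμA
  have hp : aeval A (X ^ 2 + C 2 * X : ℝ[X]) = A * A + 2 • A := by
    rw [map_add, map_pow, map_mul, aeval_X, aeval_C, sq, two_nsmul, Algebra.algebraMap_eq_smul_one,
      smul_mul_assoc, one_mul, two_smul]
  have h := (hp ▸ hA).eval_nonneg_of_mem_spectrum hμA
  simp only [eval_add, eval_pow, eval_mul, eval_X, eval_C] at h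
  nlinarith [hμ.1, hμ.2]

theorem SimpleGraph.map_adjMatrix_natCast {V R : Type*} [DecidableEq V] [NonAssocSemiring R]
    (G : SimpleGraph V) [DecidableRel G.Adj] :
    (G.adjMatrix ℕ).map (Nat.cast : ℕ → R) = G.adjMatrix R := by
  ext i j
  by_cases h : G.Adj i j <;> simp [h]

def dodecahedronFace : Fin 10 ⊕ Fin 2 → Finset (Fin 2 × Fin 10)
  | .inl i => {(0, i), (0, i + 1), (0, i + 2), (1, i), (1, i + 2)}
  | .inr 0 => {(1, 0), (1, 2), (1, 4), (1, 6), (1, 8)}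
  | .inr 1 => {(1, 1), (1, 3), (1, 5), (1, 7), (1, 9)}

def dodecahedronFaceIndicator (R : Type*) [Zero R] [One R] (f : Fin 10 ⊕ Fin 2) :
    Fin 2 × Fin 10 → R :=
  fun v => if v ∈ dodecahedronFace f then 1 else 0

set_option maxHeartbeats 1000000 in
theorem dodecahedron_adjMatrix_mul_self_add_two_nsmul_nat :
    dodecahedron.adjMatrix ℕ * dodecahedron.adjMatrix ℕ + 2 • dodecahedron.adjMatrix ℕ =
      ∑ f, vecMulVec (dodecahedronFaceIndicator ℕ f) (dodecahedronFaceIndicator ℕ f) := by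
  decide

theorem dodecahedron_adjMatrix_mul_self_add_two_nsmul (R : Type*) [NonAssocSemiring R] :
    dodecahedron.adjMatrix R * dodecahedron.adjMatrix R + 2 • dodecahedron.adjMatrix R =
      ∑ f, vecMulVec (dodecahedronFaceIndicator R f) (dodecahedronFaceIndicator R f) := by
  have h := congrArg (Nat.castRingHom R).mapMatrix dodecahedron_adjMatrix_mul_self_add_two_nsmul_nat
  simp only [map_add, map_mul, map_nsmul, map_sum, RingHom.mapMatrix_apply, Nat.coe_castRingHom] at h
  rw [SimpleGraph.map_adjMatrix_natCast] at h
  rw [h]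
  congr! with f
  ext i j
  simp only [map_apply, vecMulVec_apply, dodecahedronFaceIndicator]
  split_ifs <;> simp

theorem posSemidef_dodecahedron_adjMatrix_mul_self_add_two_nsmul :
    (dodecahedron.adjMatrix ℝ * dodecahedron.adjMatrix ℝ +
      2 • dodecahedron.adjMatrix ℝ).PosSemidef := by
  rw [dodecahedron_adjMatrix_mul_self_add_two_nsmul]
  exact posSemidef_sum _ fun f _ => posSemidef_vecMulVec_self_star _

theorem stmt_7 :
    ∀ μ ∈ Set.Ioo (-2 : ℝ) 0, μ ∉ spectrum ℝ (dodecahedron.adjMatrix ℝ) :=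
  fun _ ↦ notMem_spectrum_of_posSemidef_mul_self_add_two_nsmul
    posSemidef_dodecahedron_adjMatrix_mul_self_add_two_nsmul
end

section
/- Let G be a cubic graph of girth 5 whose adjacency matrix has no eigenvalue in (-2,0), let C be a 5-cycle in G with vertices u₀,…,u₄ and pendant neighbours v₀,…,v₄ (vᵢ the neighbour of uᵢ off C). Then no vᵢ can have both of its remaining two neighbours outside the set {u₀,…,u₄,v₀,…,v₄} with each of those neighbours having no other neighbour among v₀,…,v₄. Equivalently: if w₀, w₁ are the two neighbours of v₀ other than u₀, and neither w₀ nor w₁ is adjacent to any of v₁,…,v₄, then the 8×8 principal submatrix of A²+2A indexed by {u₀,u₁,u₂,u₃,u₄,v₀,w₀,w₁} has determinant -4, contradicting positive semidefiniteness. -/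
/-!
In a `d`-regular graph of girth at least 5, the entry `(A² + 2A)ₓᵧ` is `d`, `2`, `1` or `0`
according as `x` and `y` are at distance `0`, `1`, `2` or more. In the configuration of the
theorem all these distances among `u₀, …, u₄, v₀, w₀, w₁` are forced, so the principal
submatrix of `A² + 2A` on these eight vertices is an explicit integer matrix, which is not
positive semidefinite. On the other hand `A² + 2A = f(A)` for `f(μ) = μ² + 2μ`, which is
nonnegative off `(-2, 0)`, so the spectral hypothesis makes `A² + 2A` positive semidefinite.
-/

open Matrix Finset

def pendantPentagonBlock : Matrix (Fin 8) (Fin 8) ℝ :=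
  !![3, 2, 1, 1, 2, 2, 1, 1;
     2, 3, 2, 1, 1, 1, 0, 0;
     1, 2, 3, 2, 1, 0, 0, 0;
     1, 1, 2, 3, 2, 0, 0, 0;
     2, 1, 1, 2, 3, 1, 0, 0;
     2, 1, 0, 0, 1, 3, 2, 2;
     1, 0, 0, 0, 0, 2, 3, 1;
     1, 0, 0, 0, 0, 2, 1, 3]

lemma not_posSemidef_pendantPentagonBlock : ¬ pendantPentagonBlock.PosSemidef := fun h => by
  -- the quadratic form of the block takes the value `-9` at this vector
  have := h.dotProduct_mulVec_nonneg ![-6, 8, -4, -4, 8, -9, 6, 6]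
  norm_num [pendantPentagonBlock, dotProduct, mulVec, Fin.sum_univ_succ] at this

open scoped MatrixOrder in
lemma Matrix.posSemidef_sq_add_two_smul {n : Type*} [Fintype n] [DecidableEq n]
    {A : Matrix n n ℝ} (hA : A.IsHermitian)
    (h : ∀ μ ∈ Set.Ioo (-2 : ℝ) 0, μ ∉ spectrum ℝ A) : (A ^ 2 + 2 • A).PosSemidef := by
  have hsa : IsSelfAdjoint A := hA
  have hcfc : A ^ 2 + 2 • A = cfc (fun μ : ℝ => μ ^ 2 + 2 * μ) A := by
    rw [cfc_add .., cfc_pow .., cfc_const_mul .., cfc_id' .., two_smul, two_smul]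
  rw [← nonneg_iff_posSemidef, hcfc]
  refine cfc_nonneg fun μ hμ => ?_
  have := mt (h μ) (not_not.2 hμ)
  rw [Set.mem_Ioo, not_and_or, not_lt, not_lt] at this
  rcases this with hμ | hμ <;> nlinarith

namespace SimpleGraph

variable {V : Type*} {G : SimpleGraph V} {a b c d x y z : V}

lemma not_adj_of_three_lt_egirth (h : 3 < G.egirth) (hab : G.Adj a b) (hbc : G.Adj b c) :
    ¬ G.Adj c a := fun hca => by
  have hcyc : (Walk.cons hab (Walk.cons hbc (Walk.cons hca Walk.nil))).IsCycle := by
    simp [Walk.isCycle_def, hab.ne, hbc.ne, hca.ne, hab.ne', hca.ne']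
  simpa using h.trans_le (egirth_le_length hcyc)

lemma not_adj_of_four_lt_egirth (h : 4 < G.egirth) (hab : G.Adj a b) (hbc : G.Adj b c)
    (hcd : G.Adj c d) (hac : a ≠ c) (hbd : b ≠ d) : ¬ G.Adj d a := fun hda => by
  have hcyc :
      (Walk.cons hab (Walk.cons hbc (Walk.cons hcd (Walk.cons hda Walk.nil)))).IsCycle := by
    simp [Walk.isCycle_def, hab.ne, hbc.ne, hcd.ne, hda.ne, hab.ne', hda.ne', hac, hbd, hac.symm]
  simpa using h.trans_le (egirth_le_length hcyc)

section Finite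

variable [Fintype V] [DecidableEq V] [DecidableRel G.Adj]

lemma adj_iff_of_degree_eq_three (hx : G.degree x = 3) (ha : G.Adj x a) (hb : G.Adj x b)
    (hc : G.Adj x c) (hab : a ≠ b) (hac : a ≠ c) (hbc : b ≠ c) :
    G.Adj x z ↔ z = a ∨ z = b ∨ z = c := by
  have hsub : {a, b, c} ⊆ G.neighborFinset x := by simp [insert_subset_iff, ha, hb, hc]
  have hN : {a, b, c} = G.neighborFinset x :=
    eq_of_subset_of_card_le hsub (by rw [card_neighborFinset_eq_degree, hx,
      card_eq_three.2 ⟨a, b, c, hab, hac, hbc, rfl⟩])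
  rw [← mem_neighborFinset, ← hN]
  simp

variable {α : Type*} [Semiring α]

lemma adjMatrix_mul_self_apply_of_ne (h : 4 < G.egirth) (hxy : x ≠ y) :
    (G.adjMatrix α * G.adjMatrix α) x y = if ∃ z, G.Adj x z ∧ G.Adj z y then 1 else 0 := by
  have hle : #{z ∈ G.neighborFinset x | G.Adj z y} ≤ 1 := card_le_one.2 fun z hz z' hz' => by
    simp only [mem_filter, mem_neighborFinset] at hz hz'
    by_contra hne
    exact not_adj_of_four_lt_egirth h hz.1 hz.2 hz'.2.symm hxy hne hz'.1.symm
  rw [adjMatrix_mul_apply]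
  simp only [adjMatrix_apply, sum_boole]
  split_ifs with hex
  · obtain ⟨z, hxz, hzy⟩ := hex
    have : 0 < #{z ∈ G.neighborFinset x | G.Adj z y} := card_pos.2 ⟨z, by simp [hxz, hzy]⟩
    rw [show #{z ∈ G.neighborFinset x | G.Adj z y} = 1 by omega, Nat.cast_one]
  · rw [card_eq_zero.2 (filter_eq_empty_iff.2 fun z hz hzy => hex ⟨z, by simpa using hz, hzy⟩),
      Nat.cast_zero]

lemma adjMatrix_sq_add_two_smul_apply {k : ℕ} (hreg : G.IsRegularOfDegree k)
    (h : 4 < G.egirth) (x y : V) :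
    (G.adjMatrix α ^ 2 + 2 • G.adjMatrix α) x y =
      if x = y then (k : α) else if G.Adj x y then 2
      else if ∃ z, G.Adj x z ∧ G.Adj z y then 1 else 0 := by
  rw [Matrix.add_apply, Matrix.smul_apply, sq]
  by_cases hxy : x = y
  · subst hxy
    rw [adjMatrix_mul_self_apply_self, hreg.degree_eq]
    simp
  rw [adjMatrix_mul_self_apply_of_ne h hxy]
  by_cases hadj : G.Adj x y
  · have : ¬ ∃ z, G.Adj x z ∧ G.Adj z y := fun ⟨z, hxz, hzy⟩ =>
      not_adj_of_three_lt_egirth (lt_trans (by norm_num) h) hxz hzy hadj.symm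
    simp [hxy, hadj, this]
  · simp [hxy, hadj]

end Finite

structure PendantPentagon (G : SimpleGraph V) where
  u : Fin 5 → V
  v : Fin 5 → V
  injective_u : Function.Injective u
  adj_succ : ∀ i, G.Adj (u i) (u (i + 1))
  adj_pendant : ∀ i, G.Adj (u i) (v i)
  pendant_ne : ∀ i j, v i ≠ u j

namespace PendantPentagon

variable (P : G.PendantPentagon)

lemma adj_pred (i : Fin 5) : G.Adj (P.u i) (P.u (i + 4)) := by
  simpa [add_assoc] using (P.adj_succ (i + 4)).symm

lemma injective_v (h : 4 < G.egirth) : Function.Injective P.v := by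
  intro i j hij
  by_contra hne
  have hi := P.adj_pendant i
  have hj : G.Adj (P.u j) (P.v i) := hij ▸ P.adj_pendant j
  have h3 : 3 < G.egirth := lt_trans (by norm_num) h
  obtain ⟨k, rfl⟩ : ∃ k, j = i + k := ⟨j - i, by abel⟩
  obtain rfl | rfl | rfl | rfl : k = 1 ∨ k = 2 ∨ k = 3 ∨ k = 4 := by omega
  · exact not_adj_of_three_lt_egirth h3 (P.adj_succ i) hj hi.symm
  · exact not_adj_of_four_lt_egirth h (P.adj_succ i)
      (by simpa [add_assoc] using P.adj_succ (i + 1))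
      hj (P.injective_u.ne (by omega)) (P.pendant_ne i _).symm hi.symm
  · exact not_adj_of_four_lt_egirth h (P.adj_pred i)
      (by simpa [add_assoc] using P.adj_pred (i + 4))
      hj (P.injective_u.ne (by omega)) (P.pendant_ne i _).symm hi.symm
  · exact not_adj_of_three_lt_egirth h3 (P.adj_pred i) hj hi.symm

variable [Fintype V] [DecidableEq V] [DecidableRel G.Adj]

lemma adj_u_iff (hreg : G.IsRegularOfDegree 3) (i : Fin 5) :
    G.Adj (P.u i) z ↔ z = P.u (i + 4) ∨ z = P.u (i + 1) ∨ z = P.v i :=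
  adj_iff_of_degree_eq_three (hreg.degree_eq _) (P.adj_pred i) (P.adj_succ i) (P.adj_pendant i)
    (P.injective_u.ne (by omega)) (P.pendant_ne i _).symm (P.pendant_ne i _).symm

lemma adj_u_iff' (hreg : G.IsRegularOfDegree 3) (i : Fin 5) :
    G.Adj z (P.u i) ↔ z = P.u (i + 4) ∨ z = P.u (i + 1) ∨ z = P.v i := by
  rw [G.adj_comm, P.adj_u_iff hreg]

theorem submatrix_eq_pendantPentagonBlock (hreg : G.IsRegularOfDegree 3) (hg : 4 < G.egirth)
    {w₀ w₁ : V} (hw : w₀ ≠ w₁) (hw₀ : G.Adj (P.v 0) w₀) (hw₁ : G.Adj (P.v 0) w₁)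
    (hw₀u : ∀ j, w₀ ≠ P.u j) (hw₁u : ∀ j, w₁ ≠ P.u j)
    (hw₀v : ∀ j, w₀ ≠ P.v j) (hw₁v : ∀ j, w₁ ≠ P.v j)
    (hnadj₀ : ∀ j, j ≠ 0 → ¬ G.Adj w₀ (P.v j)) (hnadj₁ : ∀ j, j ≠ 0 → ¬ G.Adj w₁ (P.v j)) :
    (G.adjMatrix ℝ ^ 2 + 2 • G.adjMatrix ℝ).submatrix
      ![P.u 0, P.u 1, P.u 2, P.u 3, P.u 4, P.v 0, w₀, w₁]
      ![P.u 0, P.u 1, P.u 2, P.u 3, P.u 4, P.v 0, w₀, w₁] = pendantPentagonBlock := by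
  have hv₀ (z : V) : G.Adj (P.v 0) z ↔ z = P.u 0 ∨ z = w₀ ∨ z = w₁ :=
    adj_iff_of_degree_eq_three (hreg.degree_eq _) (P.adj_pendant 0).symm hw₀ hw₁
      (hw₀u 0).symm (hw₁u 0).symm hw
  have hv₀' (z : V) : G.Adj z (P.v 0) ↔ z = P.u 0 ∨ z = w₀ ∨ z = w₁ := by
    rw [G.adj_comm, hv₀]
  have hvw₀ (i : Fin 5) (hi : i ≠ 0) : ¬ G.Adj (P.v i) w₀ := fun h => hnadj₀ i hi h.symm
  have hvw₁ (i : Fin 5) (hi : i ≠ 0) : ¬ G.Adj (P.v i) w₁ := fun h => hnadj₁ i hi h.symm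
  have hww : ¬ G.Adj w₀ w₁ :=
    not_adj_of_three_lt_egirth (lt_trans (by norm_num) hg) hw₁.symm hw₀
  have hww' : ¬ G.Adj w₁ w₀ := fun h => hww h.symm
  have hcommon₀₁ : ∃ z, G.Adj w₀ z ∧ G.Adj z w₁ := ⟨P.v 0, hw₀.symm, hw₁⟩
  have hcommon₁₀ : ∃ z, G.Adj w₁ z ∧ G.Adj z w₀ := ⟨P.v 0, hw₁.symm, hw₀⟩
  ext i j
  rw [submatrix_apply, adjMatrix_sq_add_two_smul_apply hreg hg]
  -- adjacencies and common neighbours are decided through the known neighbourhoods of the `u i`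
  -- and of `v 0`; only `w₀, w₁` need their common neighbour `v 0` supplied explicitly
  fin_cases i <;> fin_cases j <;>
    simp [pendantPentagonBlock, P.adj_u_iff hreg, P.adj_u_iff' hreg, hv₀, hv₀',
      P.injective_u.eq_iff, (P.injective_v hg).eq_iff, P.pendant_ne,
      fun i j => (P.pendant_ne i j).symm, hw₀u, hw₁u, hw₀v, hw₁v, fun j => (hw₀u j).symm,
      fun j => (hw₁u j).symm, fun j => (hw₀v j).symm, fun j => (hw₁v j).symm, hw, hw.symm,
      hnadj₀, hnadj₁, hvw₀, hvw₁, hww, hww', hcommon₀₁, hcommon₁₀,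
      and_or_left, exists_or]

end PendantPentagon

end SimpleGraph

theorem stmt_10 {V : Type*} [Fintype V] [DecidableEq V]
    (G : SimpleGraph V) [DecidableRel G.Adj]
    (hreg : G.IsRegularOfDegree 3) (hg : G.egirth = 5)
    (hspec : ∀ μ ∈ Set.Ioo (-2 : ℝ) 0, μ ∉ spectrum ℝ (G.adjMatrix ℝ))
    (u v : Fin 5 → V)
    (hu : Function.Injective u) (hc : ∀ i, G.Adj (u i) (u (i + 1)))
    (hv : ∀ i, G.Adj (u i) (v i)) (hvu : ∀ i j, v i ≠ u j)
    (w₀ w₁ : V) (hw : w₀ ≠ w₁)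
    (hw₀ : G.Adj (v 0) w₀) (hw₁ : G.Adj (v 0) w₁)
    (hw₀u : ∀ j, w₀ ≠ u j) (hw₁u : ∀ j, w₁ ≠ u j)
    (hw₀v : ∀ j, w₀ ≠ v j) (hw₁v : ∀ j, w₁ ≠ v j)
    (hnadj₀ : ∀ j, j ≠ 0 → ¬ G.Adj w₀ (v j))
    (hnadj₁ : ∀ j, j ≠ 0 → ¬ G.Adj w₁ (v j)) :
    (letI A : Matrix V V ℝ := G.adjMatrix ℝ
     letI M := A ^ 2 + 2 • A
     letI T : Fin 8 → V := ![u 0, u 1, u 2, u 3, u 4, v 0, w₀, w₁]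
     (M.submatrix T T).det = -4) ∧ False := by
  let P : G.PendantPentagon := ⟨u, v, hu, hc, hv, hvu⟩
  have hg' : 4 < G.egirth := by rw [hg]; norm_num
  have hPSD := (posSemidef_sq_add_two_smul (G.isHermitian_adjMatrix ℝ) hspec).submatrix
    ![P.u 0, P.u 1, P.u 2, P.u 3, P.u 4, P.v 0, w₀, w₁]
  rw [P.submatrix_eq_pendantPentagonBlock hreg hg' hw hw₀ hw₁ hw₀u hw₁u hw₀v hw₁v hnadj₀
    hnadj₁] at hPSD
  exact (not_posSemidef_pendantPentagonBlock hPSD).elim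
end

section
/- The Petersen graph is the unique cubic graph on 10 vertices with girth 5 (up to isomorphism). -/
/-- The Petersen graph as the Kneser graph $K(5,2)$. -/
def petersen : SimpleGraph {s : Finset (Fin 5) // s.card = 2} where
  Adj a b := Disjoint (a : Finset (Fin 5)) (b : Finset (Fin 5))
  symm := ⟨fun _ _ h => h.symm⟩
  loopless := ⟨fun a h => by
    simp only [disjoint_self] at h
    have := a.2
    simp [h] at this⟩

instance : DecidableRel petersen.Adj :=
  fun a b => inferInstanceAs (Decidable (Disjoint (a : Finset (Fin 5)) b))

/-!
A cubic graph of girth 5 contains a pentagon `c₀ … c₄`. Each `cᵢ` has a third neighbour `dᵢ`, and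
the absence of triangles and quadrilaterals makes the ten vertices `cᵢ, dᵢ` distinct, so on ten
vertices they are all of them. The two remaining neighbours of `dᵢ` can only be `d_{i ± 2}`: every
`c_j` is saturated and `d_{i ± 1}` would close a quadrilateral. Hence `G` contains the generalized
Petersen graph `GP(5, 2)` (outer pentagon, spokes, inner pentagram), and an injective homomorphism
between cubic graphs with the same number of vertices is an isomorphism.
-/

namespace SimpleGraph

section General

variable {V W : Type*} {G : SimpleGraph V} {H : SimpleGraph W}

noncomputable def Hom.isoOfInjectiveOfIsRegular [Fintype V] [Fintype W] [G.LocallyFinite]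
    [H.LocallyFinite] {k : ℕ} (f : G →g H) (hf : Function.Injective f)
    (hcard : Fintype.card V = Fintype.card W) (hG : G.IsRegularOfDegree k)
    (hH : H.IsRegularOfDegree k) : G ≃g H where
  toEquiv := Equiv.ofBijective f ((Fintype.bijective_iff_injective_and_card f).mpr ⟨hf, hcard⟩)
  map_rel_iff' {a b} := by
    classical
    refine ⟨fun hab => ?_, f.map_adj⟩
    have himage : (G.neighborFinset a).image f = H.neighborFinset (f a) :=
      Finset.eq_of_subset_of_card_le
        (fun x hx => by
          obtain ⟨y, hy, rfl⟩ := Finset.mem_image.mp hx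
          exact (H.mem_neighborFinset _ _).mpr (f.map_adj ((G.mem_neighborFinset _ _).mp hy)))
        (by rw [Finset.card_image_of_injective _ hf, card_neighborFinset_eq_degree,
          card_neighborFinset_eq_degree, hG a, hH (f a)])
    obtain ⟨y, hy, hyb⟩ := Finset.mem_image.mp
      (himage ▸ (H.mem_neighborFinset _ _).mpr hab : f b ∈ (G.neighborFinset a).image f)
    exact hf hyb ▸ (G.mem_neighborFinset _ _).mp hy

theorem Copy.adj_cycleGraph_add_one {n : ℕ} (f : (cycleGraph (n + 2)).Copy G)
    (i : Fin (n + 2)) : G.Adj (f i) (f (i + 1)) :=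
  f.toHom.map_adj (by simp [cycleGraph_adj])

theorem cycleGraph_isContained_iff_exists_injective {n : ℕ} :
    cycleGraph (n + 2) ⊑ G ↔
      ∃ c : Fin (n + 2) → V, Function.Injective c ∧ ∀ i, G.Adj (c i) (c (i + 1)) := by
  constructor
  · rintro ⟨f⟩
    exact ⟨f, f.injective, f.adj_cycleGraph_add_one⟩
  · rintro ⟨c, hc, hadj⟩
    refine ⟨⟨⟨c, fun {i j} h => ?_⟩, hc⟩⟩
    rcases cycleGraph_adj.mp h with h | h
    · rw [sub_eq_iff_eq_add'.mp h]
      exact (hadj j).symm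
    · rw [sub_eq_iff_eq_add'.mp h]
      exact hadj i

theorem egirth_le_of_cycleGraph_isContained {n : ℕ} (hn : 3 ≤ n) (h : cycleGraph n ⊑ G) :
    G.egirth ≤ n := by
  obtain ⟨a, w, hw, rfl⟩ := (cycleGraph_isContained_iff hn).mp h
  exact egirth_le_length hw

theorem le_egirth_iff_free_cycleGraph {n : ℕ} :
    n ≤ G.egirth ↔ ∀ m, 3 ≤ m → m < n → (cycleGraph m).Free G := by
  constructor
  · rintro h m hm hmn hcopy
    have := h.trans (egirth_le_of_cycleGraph_isContained hm hcopy)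
    norm_cast at this
    omega
  · refine fun h => le_egirth.mpr fun a w hw => ?_
    by_contra! hlt
    norm_cast at hlt
    exact h _ hw.three_le_length hlt
      ((cycleGraph_isContained_iff hw.three_le_length).mpr ⟨a, w, hw, rfl⟩)

theorem cycleGraph_isContained_of_egirth_eq {n : ℕ} (h : G.egirth = n) : cycleGraph n ⊑ G := by
  have hn : 3 ≤ n := by exact_mod_cast h ▸ G.three_le_egirth
  obtain ⟨a, w, hw, hlen⟩ := exists_egirth_eq_length.mpr fun hG =>
    ENat.top_ne_natCast n (hG.egirth_eq_top ▸ h)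
  exact (cycleGraph_isContained_iff hn).mpr ⟨a, w, hw, by exact_mod_cast hlen.symm.trans h⟩

theorem five_le_egirth_iff :
    5 ≤ G.egirth ↔ (∀ a b c, G.Adj a b → G.Adj b c → ¬G.Adj c a) ∧
      ∀ a b c d, G.Adj a b → G.Adj b c → G.Adj c d → G.Adj d a → a = c ∨ b = d := by
  rw [show (5 : ℕ∞) = (5 : ℕ) from rfl, le_egirth_iff_free_cycleGraph]
  constructor
  · intro h
    refine ⟨fun a b c hab hbc hca => h 3 le_rfl (by norm_num)
      (cycleGraph_isContained_iff_exists_injective.mpr ⟨![a, b, c], ?_, ?_⟩),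
      fun a b c d hab hbc hcd hda => ?_⟩
    · intro i j hij
      fin_cases i <;> fin_cases j <;> simp_all [hab.ne, hbc.ne, hca.ne, hab.ne', hbc.ne', hca.ne']
    · intro i
      fin_cases i <;> simpa
    · by_contra! hne
      refine h 4 (by norm_num) (by norm_num)
        (cycleGraph_isContained_iff_exists_injective.mpr ⟨![a, b, c, d], ?_, ?_⟩)
      · intro i j hij
        fin_cases i <;> fin_cases j <;>
          simp_all [hab.ne, hbc.ne, hcd.ne, hda.ne, hab.ne', hbc.ne', hcd.ne', hda.ne', eq_comm]
      · intro i
        fin_cases i <;> simpa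
  · rintro ⟨h3, h4⟩ m hm hm5 hcopy
    interval_cases m
    · obtain ⟨c, -, hc⟩ := cycleGraph_isContained_iff_exists_injective.mp hcopy
      exact h3 _ _ _ (hc 0) (hc 1) (hc 2)
    · obtain ⟨c, hinj, hc⟩ := cycleGraph_isContained_iff_exists_injective.mp hcopy
      rcases h4 _ _ _ _ (hc 0) (hc 1) (hc 2) (hc 3) with h | h
      · exact absurd (hinj h) (by decide)
      · exact absurd (hinj h) (by decide)

end General

def generalizedPetersen52 : SimpleGraph (Fin 5 ⊕ Fin 5) where
  Adj
    | .inl i, .inl j => j = i + 1 ∨ i = j + 1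
    | .inr i, .inr j => j = i + 2 ∨ i = j + 2
    | .inl i, .inr j | .inr j, .inl i => i = j
  symm := ⟨by rintro (i | i) (j | j) h <;> simp_all [or_comm, eq_comm]⟩
  loopless := ⟨by rintro (i | i) h <;> revert i h <;> decide⟩

instance : DecidableRel generalizedPetersen52.Adj := fun a b => by
  cases a <;> cases b <;> unfold generalizedPetersen52 <;> infer_instance

section Spokes

variable {V : Type*} {G : SimpleGraph V}

theorem exists_adj_iff_of_degree_eq_three {v p q : V} [Fintype (G.neighborSet v)]
    (hv : G.degree v = 3) (hp : G.Adj v p) (hq : G.Adj v q) (hpq : p ≠ q) :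
    ∃ x, x ≠ p ∧ x ≠ q ∧ ∀ y, G.Adj v y ↔ y = p ∨ y = q ∨ y = x := by
  classical
  have hcard : (((G.neighborFinset v).erase p).erase q).card = 1 := by
    rw [Finset.card_erase_of_mem
        (Finset.mem_erase.mpr ⟨hpq.symm, (G.mem_neighborFinset _ _).mpr hq⟩),
      Finset.card_erase_of_mem ((G.mem_neighborFinset _ _).mpr hp),
      card_neighborFinset_eq_degree, hv]
  obtain ⟨x, hx⟩ := Finset.card_eq_one.mp hcard
  have hmem : x ∈ ((G.neighborFinset v).erase p).erase q := hx ▸ Finset.mem_singleton_self x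
  simp only [Finset.mem_erase] at hmem
  refine ⟨x, hmem.2.1, hmem.1, fun y => ⟨fun hy => ?_, ?_⟩⟩
  · by_contra! hne
    have : y ∈ ((G.neighborFinset v).erase p).erase q := by simp [hne.1, hne.2.1, hy]
    exact hne.2.2 (by simpa [hx] using this)
  · rintro (rfl | rfl | rfl)
    exacts [hp, hq, by simpa using hmem.2.2]

theorem adj_of_degree_eq_three {v p q r : V} [Fintype (G.neighborSet v)]
    (hv : G.degree v = 3) (h : ∀ x, G.Adj v x → x = p ∨ x = q ∨ x = r) : G.Adj v r := by
  classical
  have : G.neighborFinset v = {p, q, r} := by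
    refine Finset.eq_of_subset_of_card_le (fun x hx => ?_) ?_
    · simpa using h x ((G.mem_neighborFinset _ _).mp hx)
    · rw [card_neighborFinset_eq_degree, hv]; exact Finset.card_le_three
  simp [← G.mem_neighborFinset, this]

private lemma fin_five_cases (i j : Fin 5) :
    j = i ∨ j = i + 1 ∨ j = i + 2 ∨ i = j + 1 ∨ i = j + 2 := by
  revert i j; decide

def IsSpokes (f : (cycleGraph 5).Copy G) (d : Fin 5 → V) : Prop :=
  (∀ i, d i ∉ Set.range f) ∧ ∀ i y, G.Adj (f i) y ↔ y = f (i - 1) ∨ y = f (i + 1) ∨ y = d i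

theorem Copy.not_adj_add_two (f : (cycleGraph 5).Copy G) (hg : 5 ≤ G.egirth) (i : Fin 5) :
    ¬G.Adj (f i) (f (i + 2)) := fun h =>
  (five_le_egirth_iff.mp hg).1 _ _ _ (f.adj_cycleGraph_add_one i)
    (by simpa [add_assoc, one_add_one_eq_two] using f.adj_cycleGraph_add_one (i + 1)) h.symm

theorem exists_isSpokes [G.LocallyFinite] (hreg : G.IsRegularOfDegree 3) (hg : 5 ≤ G.egirth)
    (f : (cycleGraph 5).Copy G) : ∃ d, IsSpokes f d := by
  have hne (i : Fin 5) : f (i - 1) ≠ f (i + 1) := fun h =>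
    (by decide : ∀ k : Fin 5, k - 1 ≠ k + 1) i (f.injective h)
  choose d hd1 hd2 hN using fun i => exists_adj_iff_of_degree_eq_three (hreg (f i))
    (by simpa using (f.adj_cycleGraph_add_one (i - 1)).symm) (f.adj_cycleGraph_add_one i) (hne i)
  refine ⟨d, fun i ⟨j, hj⟩ => ?_, hN⟩
  have hadj : G.Adj (f i) (f j) := (hN i _).mpr (Or.inr (Or.inr hj))
  rcases fin_five_cases i j with rfl | rfl | rfl | rfl | rfl
  · exact hadj.ne rfl
  · exact hd2 i hj.symm
  · exact f.not_adj_add_two hg i hadj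
  · exact hd1 (j + 1) (by simpa using hj.symm)
  · exact f.not_adj_add_two hg j hadj.symm

namespace IsSpokes

variable {f : (cycleGraph 5).Copy G} {d : Fin 5 → V}

theorem adj (hd : IsSpokes f d) (i : Fin 5) : G.Adj (f i) (d i) :=
  (hd.2 i _).mpr (Or.inr (Or.inr rfl))

theorem injective (hg : 5 ≤ G.egirth) (hd : IsSpokes f d) : Function.Injective d := by
  have ne_add_one (i : Fin 5) : d i ≠ d (i + 1) := fun h =>
    (five_le_egirth_iff.mp hg).1 _ _ _ (f.adj_cycleGraph_add_one i) (h ▸ hd.adj (i + 1))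
      (hd.adj i).symm
  have ne_add_two (i : Fin 5) : d i ≠ d (i + 2) := fun h => by
    rcases (five_le_egirth_iff.mp hg).2 _ _ _ _ (f.adj_cycleGraph_add_one i)
      (by simpa [add_assoc, one_add_one_eq_two] using f.adj_cycleGraph_add_one (i + 1))
      (hd.adj (i + 2)) (h ▸ (hd.adj i).symm) with h' | h'
    · exact (by decide : ∀ k : Fin 5, k ≠ k + 2) i (f.injective h')
    · exact hd.1 (i + 2) ⟨_, h'⟩
  intro i j h
  rcases fin_five_cases i j with rfl | rfl | rfl | rfl | rfl
  · rfl
  · exact absurd h (ne_add_one i)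
  · exact absurd h (ne_add_two i)
  · exact absurd h.symm (ne_add_one j)
  · exact absurd h.symm (ne_add_two j)

theorem bijective [Fintype V] (hcard : Fintype.card V = 10) (hg : 5 ≤ G.egirth)
    (hd : IsSpokes f d) : Function.Bijective (Sum.elim f d) :=
  (Fintype.bijective_iff_injective_and_card _).mpr
    ⟨f.injective.sumElim (hd.injective hg) fun i j h => hd.1 j ⟨i, h⟩, by simp [hcard]⟩

theorem adj_add_two [Fintype V] [G.LocallyFinite] (hcard : Fintype.card V = 10)
    (hreg : G.IsRegularOfDegree 3) (hg : 5 ≤ G.egirth) (hd : IsSpokes f d) (i : Fin 5) :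
    G.Adj (d i) (d (i + 2)) := by
  refine adj_of_degree_eq_three (p := f i) (q := d (i - 2)) (hreg (d i)) fun y hy => ?_
  obtain ⟨j | j, rfl⟩ := (hd.bijective hcard hg).2 y
  · rcases (hd.2 j (d i)).mp hy.symm with h | h | h
    · exact absurd ⟨_, h.symm⟩ (hd.1 i)
    · exact absurd ⟨_, h.symm⟩ (hd.1 i)
    · exact Or.inl (by simp [hd.injective hg h])
  · have square := (five_le_egirth_iff.mp hg).2
    rcases fin_five_cases i j with rfl | rfl | rfl | rfl | rfl
    · exact (hy.ne rfl).elim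
    · rcases square _ _ _ _ (f.adj_cycleGraph_add_one i) (hd.adj (i + 1)) hy.symm
        (hd.adj i).symm with h | h
      · exact absurd ⟨_, h⟩ (hd.1 (i + 1))
      · exact absurd ⟨_, h⟩ (hd.1 i)
    · exact Or.inr (Or.inr rfl)
    · rcases square _ _ _ _ (f.adj_cycleGraph_add_one j) (hd.adj (j + 1)) hy
        (hd.adj j).symm with h | h
      · exact absurd ⟨_, h⟩ (hd.1 (j + 1))
      · exact absurd ⟨_, h⟩ (hd.1 j)
    · exact Or.inr (Or.inl (by simp))

def hom [Fintype V] [G.LocallyFinite] (hcard : Fintype.card V = 10)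
    (hreg : G.IsRegularOfDegree 3) (hg : 5 ≤ G.egirth) (hd : IsSpokes f d) :
    generalizedPetersen52 →g G where
  toFun := Sum.elim f d
  map_rel' {a b} h := by
    rcases a with i | i <;> rcases b with j | j
    · rcases h with rfl | rfl
      exacts [f.adj_cycleGraph_add_one i, (f.adj_cycleGraph_add_one j).symm]
    · exact h ▸ hd.adj i
    · exact h ▸ (hd.adj j).symm
    · rcases h with rfl | rfl
      exacts [hd.adj_add_two hcard hreg hg i, (hd.adj_add_two hcard hreg hg j).symm]

end IsSpokes

end Spokes

end SimpleGraph

open SimpleGraph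

def petersenOuter (i : Fin 5) : {s : Finset (Fin 5) // s.card = 2} :=
  ⟨{2 * i, 2 * i + 1}, Finset.card_pair (by simp)⟩

def petersenInner (i : Fin 5) : {s : Finset (Fin 5) // s.card = 2} :=
  ⟨{2 * i + 2, 2 * i + 4}, Finset.card_pair (by simp)⟩

noncomputable def generalizedPetersen52IsoPetersen : generalizedPetersen52 ≃g petersen where
  toEquiv := Equiv.ofBijective (Sum.elim petersenOuter petersenInner) (by decide)
  map_rel_iff' {a b} := by revert a b; decide

theorem petersen_isRegularOfDegree_three : petersen.IsRegularOfDegree 3 := by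
  intro v; revert v; decide

theorem petersen_egirth : petersen.egirth = 5 :=
  le_antisymm
    (egirth_le_of_cycleGraph_isContained (by norm_num)
      (cycleGraph_isContained_iff_exists_injective.mpr ⟨petersenOuter, by decide, by decide⟩))
    (five_le_egirth_iff.mpr ⟨by decide, by decide⟩)

/-- The Petersen graph is the unique cubic graph on 10 vertices with girth 5. -/
theorem stmt_14 :
    (Fintype.card {s : Finset (Fin 5) // s.card = 2} = 10 ∧
      petersen.IsRegularOfDegree 3 ∧ petersen.egirth = 5) ∧
    ∀ {V : Type} [Fintype V] (G : SimpleGraph V) [DecidableRel G.Adj],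
      Fintype.card V = 10 → G.IsRegularOfDegree 3 → G.egirth = 5 →
      Nonempty (G ≃g petersen) := by
  refine ⟨⟨by decide, petersen_isRegularOfDegree_three, petersen_egirth⟩, ?_⟩
  intro V _ G _ hcard hreg hg
  obtain ⟨f⟩ := cycleGraph_isContained_of_egirth_eq hg
  obtain ⟨d, hd⟩ := exists_isSpokes hreg hg.ge f
  let φ := (hd.hom hcard hreg hg.ge).comp generalizedPetersen52IsoPetersen.symm.toHom
  have hφ : Function.Injective φ :=
    (hd.bijective hcard hg.ge).1.comp generalizedPetersen52IsoPetersen.symm.injective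
  exact ⟨(φ.isoOfInjectiveOfIsRegular hφ (by rw [hcard]; decide)
    petersen_isRegularOfDegree_three hreg).symm⟩
end
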